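/- Let (X, ℬ) be a measurable space, κ a sub-Markov transition kernel on X, m a conservative reversible probability measure for κ, and ρ : X → [0, ∞) a bounded measurable function with ∫_X ρ dm = 1. Then the probability measure ρ·m is conservative and reversible for κ if and only if ρ(x₀) = ρ(x₁) for σ_m-almost every pair (x₀, x₁) ∈ X × X. -/

import Mathlib

/-!
Write `ν = ρ·m`. Conservativity of `ν` is inherited from `m` for every bounded density. Both
sides of the reversibility identity for `ν` are integrals against `σ_m`, and reversibility of `m`
makes `σ_m` symmetric; so `ν` is reversible iff
`∫ (ρ(x₀) - ρ(x₁)) g(x₀) f(x₁) dσ_m = 0` for all bounded measurable `f, g`. This clearly holds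
when `ρ(x₀) = ρ(x₁)` a.e.; conversely, testing with `(f, g) = (1, ρ)` and `(ρ, 1)` and
subtracting gives `∫ (ρ(x₀) - ρ(x₁))² dσ_m = 0`.
-/

open MeasureTheory ProbabilityTheory

variable {X : Type*} [MeasurableSpace X]

/-- A function is bounded measurable. -/
def BddMeasurable {X : Type*} [MeasurableSpace X] (f : X → ℝ) : Prop :=
  Measurable f ∧ ∃ C : ℝ, ∀ x, |f x| ≤ C

/-- The transition operator `T f (x) = ∫ f(y) κ(x, dy)`. -/
noncomputable def Tker {X : Type*} [MeasurableSpace X] (κ : Kernel X X) (f : X → ℝ) :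
    X → ℝ :=
  fun x => ∫ y, f y ∂(κ x)

/-- `m` is an invariant measure: `∫ T f dm = ∫ f dm` for all bounded measurable `f`. -/
def IsInvariantMeas {X : Type*} [MeasurableSpace X] (κ : Kernel X X) (m : Measure X) : Prop :=
  ∀ f : X → ℝ, BddMeasurable f → ∫ x, Tker κ f x ∂m = ∫ x, f x ∂m

/-- `m` is a reversible measure: `∫ (T f) g dm = ∫ f (T g) dm`
for all bounded measurable `f, g`. -/
def IsReversibleMeas {X : Type*} [MeasurableSpace X] (κ : Kernel X X) (m : Measure X) : Prop :=
  ∀ f g : X → ℝ, BddMeasurable f → BddMeasurable g →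
    ∫ x, Tker κ f x * g x ∂m = ∫ x, f x * Tker κ g x ∂m

/-- `m` is a conservative measure: `∫ (T 1) g dm = ∫ g dm`
for all bounded measurable `g`, where `T 1 (x) = κ(x, X)`. -/
def IsConservativeMeas {X : Type*} [MeasurableSpace X] (κ : Kernel X X) (m : Measure X) :
    Prop :=
  ∀ g : X → ℝ, BddMeasurable g → ∫ x, (κ x Set.univ).toReal * g x ∂m = ∫ x, g x ∂m

/-- `m` is an extreme element of a set `C` of measures: `m ∈ C` and whenever
`m = (1 - t) • m₀ + t • m₁` with `t ∈ (0,1)` and `m₀, m₁ ∈ C`, one has `m₀ = m₁`. -/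
def IsExtremeElem {X : Type*} [MeasurableSpace X] (C : Set (Measure X)) (m : Measure X) :
    Prop :=
  m ∈ C ∧ ∀ t : ℝ, t ∈ Set.Ioo (0 : ℝ) 1 → ∀ m₀ m₁ : Measure X, m₀ ∈ C → m₁ ∈ C →
    m = ENNReal.ofReal (1 - t) • m₀ + ENNReal.ofReal t • m₁ → m₀ = m₁

namespace BddMeasurable

variable {Y : Type*} [MeasurableSpace Y] {f g : Y → ℝ}

lemma const (c : ℝ) : BddMeasurable fun _ : Y => c :=
  ⟨measurable_const, |c|, fun _ => le_rfl⟩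

lemma comp {Z : Type*} [MeasurableSpace Z] (hf : BddMeasurable f) {φ : Z → Y}
    (hφ : Measurable φ) : BddMeasurable fun z => f (φ z) :=
  ⟨hf.1.comp hφ, hf.2.imp fun _ hC z => hC (φ z)⟩

lemma sub (hf : BddMeasurable f) (hg : BddMeasurable g) : BddMeasurable fun y => f y - g y := by
  obtain ⟨Cf, hCf⟩ := hf.2
  obtain ⟨Cg, hCg⟩ := hg.2
  exact ⟨hf.1.sub hg.1, Cf + Cg, fun y => (abs_sub _ _).trans (add_le_add (hCf y) (hCg y))⟩

lemma mul (hf : BddMeasurable f) (hg : BddMeasurable g) : BddMeasurable fun y => f y * g y := by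
  obtain ⟨Cf, hCf⟩ := hf.2
  obtain ⟨Cg, hCg⟩ := hg.2
  refine ⟨hf.1.mul hg.1, Cf * Cg, fun y => ?_⟩
  rw [abs_mul]
  exact mul_le_mul (hCf y) (hCg y) (abs_nonneg _) ((abs_nonneg _).trans (hCf y))

lemma integrable {μ : Measure Y} [IsFiniteMeasure μ] (hf : BddMeasurable f) : Integrable f μ :=
  Integrable.of_bound hf.1.aestronglyMeasurable hf.2.choose
    (Filter.Eventually.of_forall fun y => hf.2.choose_spec y)

end BddMeasurable

lemma integral_withDensity_ofReal {m : Measure X} {ρ : X → ℝ} (hρm : Measurable ρ)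
    (hρ0 : ∀ x, 0 ≤ ρ x) (h : X → ℝ) :
    ∫ x, h x ∂(m.withDensity fun x => ENNReal.ofReal (ρ x)) = ∫ x, ρ x * h x ∂m := by
  change ∫ x, h x ∂(m.withDensity fun x => ((ρ x).toNNReal : ENNReal)) = _
  rw [integral_withDensity_eq_integral_smul hρm.real_toNNReal]
  simp only [NNReal.smul_def, Real.coe_toNNReal _ (hρ0 _), smul_eq_mul]

lemma IsConservativeMeas.withDensity {κ : Kernel X X} {m : Measure X}
    (hcon : IsConservativeMeas κ m) {ρ : X → ℝ} (hρ0 : ∀ x, 0 ≤ ρ x) (hρ : BddMeasurable ρ) :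
    IsConservativeMeas κ (m.withDensity fun x => ENNReal.ofReal (ρ x)) := by
  intro g hg
  simp only [integral_withDensity_ofReal hρ.1 hρ0, ← hcon _ (hρ.mul hg), mul_left_comm]

section Kernel

variable {κ : Kernel X X} [IsFiniteKernel κ] {m : Measure X} [IsFiniteMeasure m]

lemma integral_mul_tker_eq_integral_compProd {f g : X → ℝ} (hf : BddMeasurable f)
    (hg : BddMeasurable g) :
    ∫ x, g x * Tker κ f x ∂m = ∫ p, g p.1 * f p.2 ∂(m ⊗ₘ κ) := by
  rw [Measure.integral_compProd ((hg.comp measurable_fst).mul (hf.comp measurable_snd)).integrable]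
  simp only [Tker, integral_const_mul]

lemma IsReversibleMeas.integral_compProd_comm (hrev : IsReversibleMeas κ m) {f g : X → ℝ}
    (hf : BddMeasurable f) (hg : BddMeasurable g) :
    ∫ p, g p.1 * f p.2 ∂(m ⊗ₘ κ) = ∫ p, f p.1 * g p.2 ∂(m ⊗ₘ κ) := by
  rw [← integral_mul_tker_eq_integral_compProd hf hg,
    ← integral_mul_tker_eq_integral_compProd hg hf, ← hrev f g hf hg]
  simp only [mul_comm]

lemma isReversibleMeas_withDensity_iff (hrev : IsReversibleMeas κ m) {ρ : X → ℝ}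
    (hρ0 : ∀ x, 0 ≤ ρ x) (hρ : BddMeasurable ρ) :
    IsReversibleMeas κ (m.withDensity fun x => ENNReal.ofReal (ρ x)) ↔
      ∀ f g : X → ℝ, BddMeasurable f → BddMeasurable g →
        ∫ p, (ρ p.1 - ρ p.2) * (g p.1 * f p.2) ∂(m ⊗ₘ κ) = 0 := by
  refine forall₄_congr fun f g hf hg => ?_
  have hleft : ∫ x, Tker κ f x * g x ∂(m.withDensity fun x => ENNReal.ofReal (ρ x)) =
      ∫ p, ρ p.1 * (g p.1 * f p.2) ∂(m ⊗ₘ κ) := by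
    rw [integral_withDensity_ofReal hρ.1 hρ0]
    calc ∫ x, ρ x * (Tker κ f x * g x) ∂m = ∫ x, (ρ x * g x) * Tker κ f x ∂m := by
          congr 1; ext x; ring
      _ = ∫ p, (ρ p.1 * g p.1) * f p.2 ∂(m ⊗ₘ κ) :=
          integral_mul_tker_eq_integral_compProd hf (hρ.mul hg)
      _ = _ := by simp only [mul_assoc]
  have hright : ∫ x, f x * Tker κ g x ∂(m.withDensity fun x => ENNReal.ofReal (ρ x)) =
      ∫ p, ρ p.2 * (g p.1 * f p.2) ∂(m ⊗ₘ κ) := by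
    rw [integral_withDensity_ofReal hρ.1 hρ0]
    calc ∫ x, ρ x * (f x * Tker κ g x) ∂m = ∫ x, (ρ x * f x) * Tker κ g x ∂m := by
          simp only [mul_assoc]
      _ = ∫ p, (ρ p.1 * f p.1) * g p.2 ∂(m ⊗ₘ κ) :=
          integral_mul_tker_eq_integral_compProd hg (hρ.mul hf)
      _ = ∫ p, g p.1 * (ρ p.2 * f p.2) ∂(m ⊗ₘ κ) :=
          hrev.integral_compProd_comm hg (hρ.mul hf)
      _ = _ := by congr 1; ext p; ring
  have hgf := (hg.comp measurable_fst).mul (hf.comp measurable_snd)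
  rw [hleft, hright, ← sub_eq_zero, ← integral_sub ((hρ.comp measurable_fst).mul hgf).integrable
    ((hρ.comp measurable_snd).mul hgf).integrable]
  simp only [sub_mul]

end Kernel

lemma ae_eq_of_integral_sub_mul_eq_zero {Y : Type*} [MeasurableSpace Y] {μ : Measure Y}
    {u v : Y → ℝ} (hu : Integrable (fun y => (u y - v y) * u y) μ)
    (hv : Integrable (fun y => (u y - v y) * v y) μ)
    (hu0 : ∫ y, (u y - v y) * u y ∂μ = 0) (hv0 : ∫ y, (u y - v y) * v y ∂μ = 0) :
    u =ᵐ[μ] v := by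
  have hsq : ∫ y, (u y - v y) * (u y - v y) ∂μ = 0 := by
    simp only [mul_sub]
    rw [integral_sub hu hv, hu0, hv0, sub_zero]
  have hsq_int : Integrable (fun y => (u y - v y) * (u y - v y)) μ := by
    refine (hu.sub hv).congr (.of_forall fun y => ?_)
    simp only [Pi.sub_apply]
    ring
  filter_upwards [(integral_eq_zero_iff_of_nonneg (fun y => mul_self_nonneg _) hsq_int).1 hsq]
    with y hy
  exact sub_eq_zero.1 (mul_self_eq_zero.1 hy)

theorem remark_density_iff_ae_constant_on_pairs_general
    (κ : Kernel X X) [IsFiniteKernel κ]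
    (m : Measure X) [IsProbabilityMeasure m]
    (hcon : IsConservativeMeas κ m) (hrev : IsReversibleMeas κ m)
    (ρ : X → ℝ) (hρ0 : ∀ x, 0 ≤ ρ x) (hρ : BddMeasurable ρ) :
    (IsConservativeMeas κ (m.withDensity fun x => ENNReal.ofReal (ρ x)) ∧
        IsReversibleMeas κ (m.withDensity fun x => ENNReal.ofReal (ρ x))) ↔
      (∀ᵐ p : X × X ∂(m.compProd κ), ρ p.1 = ρ p.2) := by
  rw [isReversibleMeas_withDensity_iff hrev hρ0 hρ, and_iff_right (hcon.withDensity hρ0 hρ)]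
  constructor
  · intro h
    have hρ₁ := hρ.comp (measurable_fst (α := X) (β := X))
    have hρ₂ := hρ.comp (measurable_snd (α := X) (β := X))
    refine ae_eq_of_integral_sub_mul_eq_zero ((hρ₁.sub hρ₂).mul hρ₁).integrable
      ((hρ₁.sub hρ₂).mul hρ₂).integrable ?_ ?_
    · simpa only [mul_one] using h (fun _ => 1) ρ (.const 1) hρ
    · simpa only [one_mul] using h ρ (fun _ => 1) hρ (.const 1)
  · intro hae f g _ _
    refine integral_eq_zero_of_ae ?_
    filter_upwards [hae] with p hp
    simp [hp]

/-- Remark: `ρ·m` is conservative and reversible if and only if `ρ(x₀) = ρ(x₁)` for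
σ_m-almost every pair `(x₀, x₁)`. -/
theorem remark_density_iff_ae_constant_on_pairs
    (κ : Kernel X X) [IsFiniteKernel κ] (hκ : ∀ x, κ x Set.univ ≤ 1)
    (m : Measure X) [IsProbabilityMeasure m]
    (hcon : IsConservativeMeas κ m) (hrev : IsReversibleMeas κ m)
    (ρ : X → ℝ) (hρ0 : ∀ x, 0 ≤ ρ x) (hρ : BddMeasurable ρ)
    (hρ1 : ∫ x, ρ x ∂m = 1) :
    (IsConservativeMeas κ (m.withDensity fun x => ENNReal.ofReal (ρ x)) ∧
        IsReversibleMeas κ (m.withDensity fun x => ENNReal.ofReal (ρ x))) ↔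
      (∀ᵐ p : X × X ∂(m.compProd κ), ρ p.1 = ρ p.2) :=
  remark_density_iff_ae_constant_on_pairs_general κ m hcon hrev ρ hρ0 hρ
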